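/- Define ζ(M) = 1 − (1/M)·∑_{j=0}^{M−1} h(cos²(πj/(2M))) for integers M ≥ 2, where h is the binary entropy function. Then ζ(2) = 1/2, and for every integer M > 2 one has ζ(M) < 1/2. -/

import Mathlib

/-!
Writing `p = cos² θ`, one has `4 p (1 - p) = sin² 2θ`, and `∑_{j<M} sin² (π j / M) = M / 2`
because the `M`-th roots of unity sum to zero. So `ζ(M) ≤ 1/2` follows from the classical bound
`h(p) ≥ 4 p (1 - p)`, and strictness for `M > 2` from its equality cases `p ∈ {0, 1/2, 1}`,
avoided at `j = 1`. For the bound, put `x = 2p - 1`: then `(log 2 - binEntropy p) / x²` (entropy in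
nats) is a power series in `x²` with positive coefficients, hence increases with `|x|` towards its
value `log 2` at `|x| = 1`.
-/

open Real Finset

/-- Binary entropy function `h(p) = −p·log₂ p − (1−p)·log₂(1−p)`
(with `h(0) = h(1) = 0`, automatic since `Real.logb 2 0 = 0`). -/
noncomputable def binEntropy2 (p : ℝ) : ℝ :=
  -p * Real.logb 2 p - (1 - p) * Real.logb 2 (1 - p)

/-- `ζ(M) = 1 − (1/M) ∑_{j=0}^{M−1} h(cos²(πj/(2M)))`. -/
noncomputable def zetaPRB (M : ℕ) : ℝ :=
  1 - (1 / M) * ∑ j ∈ Finset.range M, binEntropy2 ((Real.cos (π * j / (2 * M))) ^ 2)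

open Filter Topology

lemma binEntropy2_eq_binEntropy_div (p : ℝ) : binEntropy2 p = binEntropy p / log 2 := by
  simp only [binEntropy2, binEntropy, logb, log_inv]
  ring

lemma hasSum_log_two_sub_binEntropy {x : ℝ} (hx : |x| < 1) :
    HasSum (fun k : ℕ => x ^ (2 * k + 2) / (2 * (k + 1) * (2 * k + 1)))
      (log 2 - binEntropy ((1 + x) / 2)) := by
  obtain ⟨hx₁, hx₂⟩ := abs_lt.1 hx
  have hodd := hasSum_log_sub_log_of_abs_lt_one hx
  have heven := hasSum_pow_div_log_of_abs_lt_one (x := x ^ 2) (by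
    rw [abs_pow]; exact pow_lt_one₀ (abs_nonneg x) hx two_ne_zero)
  have hlog : log (1 - x ^ 2) = log (1 + x) + log (1 - x) := by
    rw [← log_mul (by linarith) (by linarith)]; ring_nf
  have hent : binEntropy ((1 + x) / 2)
      = log 2 - ((1 + x) * log (1 + x) + (1 - x) * log (1 - x)) / 2 := by
    rw [binEntropy, show 1 - (1 + x) / 2 = (1 - x) / 2 by ring, inv_div, inv_div,
      log_div two_ne_zero (by linarith), log_div two_ne_zero (by linarith)]
    ring
  rw [hent, show log 2 - (log 2 - ((1 + x) * log (1 + x) + (1 - x) * log (1 - x)) / 2)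
      = x / 2 * (log (1 + x) - log (1 - x)) - -log (1 - x ^ 2) / 2 by rw [hlog]; ring]
  refine ((hodd.mul_left (x / 2)).sub (heven.div_const 2)).congr_fun fun k => ?_
  field_simp
  ring

lemma strictMonoOn_log_two_sub_binEntropy_div_sq :
    StrictMonoOn (fun x => (log 2 - binEntropy ((1 + x) / 2)) / x ^ 2) (Set.Ioo 0 1) := by
  intro x ⟨hx₀, hx₁⟩ y ⟨hy₀, hy₁⟩ hxy
  have hseries {z : ℝ} (hz₀ : 0 < z) (hz₁ : z < 1) :
      HasSum (fun k : ℕ => (z ^ 2) ^ k / (2 * (k + 1) * (2 * k + 1)))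
        ((log 2 - binEntropy ((1 + z) / 2)) / z ^ 2) := by
    refine ((hasSum_log_two_sub_binEntropy (abs_lt.2 ⟨by linarith, hz₁⟩)).div_const
      (z ^ 2)).congr_fun fun k => ?_
    field_simp
    ring
  refine hasSum_lt (i := 1) (fun k => ?_) ?_ (hseries hx₀ hx₁) (hseries hy₀ hy₁)
  · gcongr
  · norm_num
    gcongr

lemma log_two_sub_binEntropy_lt {x : ℝ} (hx₀ : 0 < x) (hx₁ : x < 1) :
    log 2 - binEntropy ((1 + x) / 2) < log 2 * x ^ 2 := by
  set φ : ℝ → ℝ := fun x => (log 2 - binEntropy ((1 + x) / 2)) / x ^ 2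
  have hlim : Tendsto φ (𝓝[<] 1) (𝓝 (log 2)) := by
    have hcont : ContinuousAt φ 1 := ContinuousAt.div (by fun_prop) (by fun_prop) (by norm_num)
    simpa [φ] using hcont.tendsto.mono_left nhdsWithin_le_nhds
  have hmono := strictMonoOn_log_two_sub_binEntropy_div_sq
  have hy₀ : 0 < (1 + x) / 2 := by linarith
  have hy₁ : (1 + x) / 2 < 1 := by linarith
  have hxy : φ x < φ ((1 + x) / 2) := hmono ⟨hx₀, hx₁⟩ ⟨hy₀, hy₁⟩ (by linarith)
  have hy : φ ((1 + x) / 2) ≤ log 2 :=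
    ge_of_tendsto hlim <| eventually_of_mem (Ioo_mem_nhdsLT hy₁) fun z hz =>
      (hmono ⟨hy₀, hy₁⟩ ⟨hy₀.trans hz.1, hz.2⟩ hz.1).le
  rw [← div_lt_iff₀ (by positivity)]
  exact hxy.trans_le hy

lemma four_mul_log_two_mul_lt_binEntropy {p : ℝ} (hp₀ : 0 < p) (hp₁ : p < 1)
    (hp : p ≠ 2⁻¹) :
    4 * log 2 * (p * (1 - p)) < binEntropy p := by
  wlog h : 2⁻¹ < p generalizing p
  · have := this (p := 1 - p) (by linarith) (by linarith) (by contrapose! hp; linarith)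
      (by contrapose! h; exact lt_of_le_of_ne (by linarith) hp.symm)
    rwa [binEntropy_one_sub, sub_sub_cancel, mul_comm (1 - p)] at this
  have := log_two_sub_binEntropy_lt (x := 2 * p - 1) (by linarith) (by linarith)
  rw [show (1 + (2 * p - 1)) / 2 = p by ring] at this
  linarith

lemma four_mul_log_two_mul_le_binEntropy {p : ℝ} (hp₀ : 0 ≤ p) (hp₁ : p ≤ 1) :
    4 * log 2 * (p * (1 - p)) ≤ binEntropy p := by
  rcases hp₀.eq_or_lt with rfl | hp₀
  · simp
  rcases hp₁.eq_or_lt with rfl | hp₁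
  · simp
  rcases eq_or_ne p 2⁻¹ with rfl | hp
  · exact le_of_eq (by rw [binEntropy_two_inv]; ring)
  exact (four_mul_log_two_mul_lt_binEntropy hp₀ hp₁ hp).le

lemma sin_two_mul_sq (θ : ℝ) : sin (2 * θ) ^ 2 = 4 * (cos θ ^ 2 * (1 - cos θ ^ 2)) := by
  rw [sin_two_mul, ← sin_sq]
  ring

lemma sin_two_mul_sq_le_binEntropy2_cos_sq (θ : ℝ) :
    sin (2 * θ) ^ 2 ≤ binEntropy2 (cos θ ^ 2) := by
  rw [binEntropy2_eq_binEntropy_div, le_div_iff₀ (log_pos one_lt_two), sin_two_mul_sq]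
  linarith [four_mul_log_two_mul_le_binEntropy (sq_nonneg (cos θ)) (cos_sq_le_one θ)]

lemma sin_two_mul_sq_lt_binEntropy2_cos_sq {θ : ℝ} (h₀ : 0 < θ) (h₁ : θ < π / 4) :
    sin (2 * θ) ^ 2 < binEntropy2 (cos θ ^ 2) := by
  have hpos : 0 < cos (2 * θ) := cos_pos_of_mem_Ioo ⟨by linarith, by linarith⟩
  have hlt : cos (2 * θ) < 1 := by
    simpa using cos_lt_cos_of_nonneg_of_le_pi_div_two le_rfl (by linarith) (by linarith)
  rw [cos_two_mul] at hpos hlt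
  rw [binEntropy2_eq_binEntropy_div, lt_div_iff₀ (log_pos one_lt_two), sin_two_mul_sq]
  linarith [four_mul_log_two_mul_lt_binEntropy (p := cos θ ^ 2) (by linarith) (by linarith)
    (by intro h; rw [h] at hpos; norm_num at hpos)]

lemma sum_range_cos_two_pi_mul_div {M : ℕ} (hM : 2 ≤ M) :
    ∑ j ∈ range M, cos (2 * π * j / M) = 0 := by
  have h := congrArg Complex.re
    ((Complex.isPrimitiveRoot_exp M (by omega)).geom_sum_eq_zero (by omega))
  rw [Complex.re_sum, Complex.zero_re] at h
  rw [← h]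
  refine sum_congr rfl fun j _ => ?_
  rw [← Complex.exp_nat_mul, ← Complex.exp_ofReal_mul_I_re]
  push_cast
  ring_nf

lemma sum_range_sin_sq_pi_mul_div {M : ℕ} (hM : 2 ≤ M) :
    ∑ j ∈ range M, sin (π * j / M) ^ 2 = M / 2 := by
  simp only [sin_sq_eq_half_sub, sum_sub_distrib, ← sum_div, mul_div_assoc', ← mul_assoc,
    sum_range_cos_two_pi_mul_div hM]
  simp

lemma zetaPRB_two : zetaPRB 2 = 1 / 2 := by
  have hcos : (√2 / 2) ^ 2 = (2⁻¹ : ℝ) := by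
    rw [div_pow, sq_sqrt zero_le_two]; norm_num
  simp [zetaPRB, sum_range_succ, binEntropy2_eq_binEntropy_div,
    show π / (2 * 2) = π / 4 by ring, hcos]
  norm_num

lemma zetaPRB_lt_half {M : ℕ} (hM : 2 < M) : zetaPRB M < 1 / 2 := by
  have hM₀ : (0 : ℝ) < M := by positivity
  have hangle (j : ℕ) : π * j / M = 2 * (π * j / (2 * M)) := by field_simp
  have hsum : (M : ℝ) / 2 < ∑ j ∈ range M, binEntropy2 (cos (π * j / (2 * M)) ^ 2) := by
    rw [← sum_range_sin_sq_pi_mul_div hM.le]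
    refine sum_lt_sum (fun j _ => ?_) ⟨1, mem_range.2 (by omega), ?_⟩
    · rw [hangle]
      exact sin_two_mul_sq_le_binEntropy2_cos_sq _
    · rw [hangle]
      refine sin_two_mul_sq_lt_binEntropy2_cos_sq (by positivity) ?_
      rw [Nat.cast_one, mul_one, div_lt_div_iff_of_pos_left pi_pos (by positivity) four_pos]
      exact_mod_cast (by omega : 4 < 2 * M)
  rw [zetaPRB, one_div_mul_eq_div, sub_lt_comm, lt_div_iff₀ hM₀]
  linarith

theorem stmt9 : zetaPRB 2 = 1 / 2 ∧ ∀ M : ℕ, 2 < M → zetaPRB M < 1 / 2 :=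
  ⟨zetaPRB_two, fun _ => zetaPRB_lt_half⟩
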